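/- arXiv:1706.02792 — 3 statements merged into one kernel-verified Lean document; each statement's English description precedes it below -/
import Mathlib

section
/- Let G = (V, E) be an undirected graph with nonnegative edge weights w, let d_w denote shortest-path distance under w, fix a, b ∈ V in the same connected component as all of V, and define p(v) = (d_w(a,v) + d_w(a,b) - d_w(v,b))/2. Define new weights w'(u,v) = w(u,v) - |p(u) - p(v)| for each edge (u,v) ∈ E. Then all new weights w' are nonnegative. -/
/-- The total weight of a walk in a graph, under edge weights `w`. -/
noncomputable def walkWeight {V : Type*} {G : SimpleGraph V} (w : V → V → ℝ)
    {x y : V} (p : G.Walk x y) : ℝ :=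
  (p.darts.map (fun d => w d.toProd.1 d.toProd.2)).sum

/-- Shortest-path distance between `x` and `y` in `G` under edge weights `w`. -/
noncomputable def spDist {V : Type*} (G : SimpleGraph V) (w : V → V → ℝ)
    (x y : V) : ℝ :=
  sInf {c : ℝ | ∃ p : G.Walk x y, walkWeight w p = c}

/-! Along an edge `uv`, the triangle inequality through that edge moves both `d(a, ·)` and
`d(·, b)` by at most `w(u, v)`, so their half-difference `p` moves by at most `w(u, v)`. -/

open SimpleGraph

section WalkWeight

variable {V : Type*} {G : SimpleGraph V} {w : V → V → ℝ}

lemma walkWeight_cons {u v y : V} (h : G.Adj u v) (q : G.Walk v y) :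
    walkWeight w (Walk.cons h q) = w u v + walkWeight w q := by
  simp [walkWeight]

lemma walkWeight_append {x y z : V} (p : G.Walk x y) (q : G.Walk y z) :
    walkWeight w (p.append q) = walkWeight w p + walkWeight w q := by
  simp [walkWeight, Walk.darts_append]

lemma walkWeight_concat {x u v : V} (p : G.Walk x u) (h : G.Adj u v) :
    walkWeight w (p.concat h) = walkWeight w p + w u v := by
  rw [Walk.concat_eq_append, walkWeight_append, walkWeight_cons]
  simp [walkWeight]

lemma walkWeight_nonneg (hw : ∀ u v, G.Adj u v → 0 ≤ w u v) {x y : V} (q : G.Walk x y) :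
    0 ≤ walkWeight w q :=
  List.sum_nonneg <| by
    simp only [List.mem_map]
    rintro _ ⟨d, -, rfl⟩
    exact hw _ _ d.adj

lemma spDist_le_walkWeight (hw : ∀ u v, G.Adj u v → 0 ≤ w u v) {x y : V} (q : G.Walk x y) :
    spDist G w x y ≤ walkWeight w q :=
  csInf_le ⟨0, by rintro _ ⟨q, rfl⟩; exact walkWeight_nonneg hw q⟩ ⟨q, rfl⟩

lemma le_spDist {x y : V} {c : ℝ} (hxy : G.Reachable x y)
    (h : ∀ q : G.Walk x y, c ≤ walkWeight w q) : c ≤ spDist G w x y :=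
  le_csInf (hxy.elim fun q => ⟨_, q, rfl⟩) (by rintro _ ⟨q, rfl⟩; exact h q)

lemma spDist_le_spDist_add_of_adj (hw : ∀ u v, G.Adj u v → 0 ≤ w u v) {x u v : V}
    (hxu : G.Reachable x u) (huv : G.Adj u v) :
    spDist G w x v ≤ spDist G w x u + w u v := by
  rw [← sub_le_iff_le_add]
  refine le_spDist hxu fun q => sub_le_iff_le_add.2 ?_
  exact walkWeight_concat q huv ▸ spDist_le_walkWeight hw (q.concat huv)

lemma spDist_le_add_spDist_of_adj (hw : ∀ u v, G.Adj u v → 0 ≤ w u v) {u v y : V}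
    (hvy : G.Reachable v y) (huv : G.Adj u v) :
    spDist G w u y ≤ w u v + spDist G w v y := by
  rw [← sub_le_iff_le_add']
  refine le_spDist hvy fun q => sub_le_iff_le_add'.2 ?_
  exact walkWeight_cons huv q ▸ spDist_le_walkWeight hw (Walk.cons huv q)

end WalkWeight

theorem fastmap_update_nonneg_general {V : Type*} (G : SimpleGraph V)
    (hconn : G.Connected) (w : V → V → ℝ)
    (hsymm : ∀ u v, w u v = w v u)
    (hnonneg : ∀ u v, G.Adj u v → 0 ≤ w u v)
    (a b : V) (p : V → ℝ)
    (hp : ∀ v, p v = (spDist G w a v + spDist G w a b - spDist G w v b) / 2)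
    (w' : V → V → ℝ)
    (hw' : ∀ u v, w' u v = w u v - |p u - p v|) :
    ∀ u v, G.Adj u v → 0 ≤ w' u v := by
  intro u v huv
  have hau := spDist_le_spDist_add_of_adj hnonneg (hconn a v) huv.symm
  have hav := spDist_le_spDist_add_of_adj hnonneg (hconn a u) huv
  have hub := spDist_le_add_spDist_of_adj hnonneg (hconn u b) huv.symm
  have hvb := spDist_le_add_spDist_of_adj hnonneg (hconn v b) huv
  rw [hw', sub_nonneg, abs_le, hp u, hp v]
  constructor <;> linarith [hsymm u v]

/-- FastMap edge-weight update preserves nonnegativity: with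
`p(v) = (d_w(a,v) + d_w(a,b) - d_w(v,b))/2`, the updated weight
`w'(u,v) = w(u,v) - |p(u) - p(v)|` is nonnegative on every edge. -/
theorem fastmap_update_nonneg {V : Type*} [Fintype V] (G : SimpleGraph V)
    (hconn : G.Connected) (w : V → V → ℝ)
    (hsymm : ∀ u v, w u v = w v u)
    (hnonneg : ∀ u v, G.Adj u v → 0 ≤ w u v)
    (a b : V) (p : V → ℝ)
    (hp : ∀ v, p v = (spDist G w a v + spDist G w a b - spDist G w v b) / 2)
    (w' : V → V → ℝ)
    (hw' : ∀ u v, w' u v = w u v - |p u - p v|) :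
    ∀ u v, G.Adj u v → 0 ≤ w' u v :=
  fastmap_update_nonneg_general G hconn w hsymm hnonneg a b p hp w' hw'
end

section
/- With G, w, p, and w' as in the FastMap update (w'(u,v) = w(u,v) - |p(u)-p(v)| where p(v) = (d_w(a,v)+d_w(a,b)-d_w(v,b))/2), the new shortest-path distance satisfies d_{w'}(x,y) ≤ d_w(x,y) - |p(x) - p(y)| for all x, y ∈ V. -/
/-!
The FastMap coordinate `p` is 1-Lipschitz for `d_w` (triangle inequality through `a` and `b`), so
`w'` is still a nonnegative weight. Along any walk from `x` to `y`, the `w'`-weight is the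
`w`-weight minus `∑ |Δp|` over its edges, and that sum telescopes to at least `|p x - p y|`.
Minimising over walks gives the bound.
-/

namespace SimpleGraph

variable {V : Type*} {G : SimpleGraph V}

section walkWeight

variable (w c : V → V → ℝ)

@[simp]
lemma walkWeight_nil {x : V} : walkWeight w (Walk.nil : G.Walk x x) = 0 := by
  simp [walkWeight]

@[simp]
lemma walkWeight_cons {x u y : V} (h : G.Adj x u) (P : G.Walk u y) :
    walkWeight w (Walk.cons h P) = w x u + walkWeight w P := by
  simp [walkWeight]

lemma walkWeight_append {x y z : V} (P : G.Walk x y) (Q : G.Walk y z) :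
    walkWeight w (P.append Q) = walkWeight w P + walkWeight w Q := by
  induction P with
  | nil => simp
  | cons h P ih => simp [ih, add_assoc]

lemma walkWeight_reverse (hs : ∀ u v, w u v = w v u) {x y : V} (P : G.Walk x y) :
    walkWeight w P.reverse = walkWeight w P := by
  induction P with
  | nil => simp
  | cons h P ih => simp [Walk.reverse_cons, walkWeight_append, ih, hs, add_comm]

lemma walkWeight_sub {x y : V} (P : G.Walk x y) :
    walkWeight (w - c) P = walkWeight w P - walkWeight c P := by
  induction P with
  | nil => simp
  | cons h P ih => simp only [walkWeight_cons, ih, Pi.sub_apply]; ring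

lemma walkWeight_nonneg (hn : ∀ u v, G.Adj u v → 0 ≤ w u v) {x y : V} (P : G.Walk x y) :
    0 ≤ walkWeight w P := by
  induction P with
  | nil => simp
  | cons h P ih => rw [walkWeight_cons]; exact add_nonneg (hn _ _ h) ih

lemma abs_sub_le_walkWeight (p : V → ℝ) {x y : V} (P : G.Walk x y) :
    |p x - p y| ≤ walkWeight (fun u v => |p u - p v|) P := by
  induction P with
  | nil => simp
  | @cons x u y h P ih =>
    rw [walkWeight_cons]
    linarith [abs_sub_le (p x) (p u) (p y)]

end walkWeight

section spDist

variable {w : V → V → ℝ}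

lemma spDist_le_walkWeight (hn : ∀ u v, G.Adj u v → 0 ≤ w u v) {x y : V} (P : G.Walk x y) :
    spDist G w x y ≤ walkWeight w P :=
  csInf_le ⟨0, by rintro _ ⟨Q, rfl⟩; exact walkWeight_nonneg w hn Q⟩ ⟨P, rfl⟩

lemma le_spDist {x y : V} {d : ℝ} (h : G.Reachable x y)
    (hd : ∀ P : G.Walk x y, d ≤ walkWeight w P) : d ≤ spDist G w x y :=
  le_csInf ⟨_, h.some, rfl⟩ (by rintro _ ⟨P, rfl⟩; exact hd P)

lemma spDist_le_of_adj (hn : ∀ u v, G.Adj u v → 0 ≤ w u v) {u v : V} (h : G.Adj u v) :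
    spDist G w u v ≤ w u v := by
  simpa using spDist_le_walkWeight hn (Walk.cons h Walk.nil)

lemma spDist_comm (hs : ∀ u v, w u v = w v u) (x y : V) :
    spDist G w x y = spDist G w y x := by
  unfold spDist
  congr 1
  ext d
  constructor <;> rintro ⟨P, rfl⟩ <;> exact ⟨P.reverse, walkWeight_reverse w hs P⟩

lemma spDist_triangle (hG : G.Preconnected) (hn : ∀ u v, G.Adj u v → 0 ≤ w u v) (x y z : V) :
    spDist G w x z ≤ spDist G w x y + spDist G w y z := by
  suffices spDist G w x z - spDist G w y z ≤ spDist G w x y by linarith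
  refine le_spDist (hG x y) fun P => ?_
  suffices spDist G w x z - walkWeight w P ≤ spDist G w y z by linarith
  refine le_spDist (hG y z) fun Q => ?_
  linarith [walkWeight_append w P Q, spDist_le_walkWeight hn (P.append Q)]

lemma spDist_sub_le {c : V → V → ℝ} {x y : V} {δ : ℝ} (h : G.Reachable x y)
    (hn : ∀ u v, G.Adj u v → 0 ≤ w u v - c u v) (hc : ∀ P : G.Walk x y, δ ≤ walkWeight c P) :
    spDist G (w - c) x y ≤ spDist G w x y - δ := by
  suffices spDist G (w - c) x y + δ ≤ spDist G w x y by linarith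
  refine le_spDist h fun P => ?_
  linarith [spDist_le_walkWeight (w := w - c) hn P, walkWeight_sub w c P, hc P]

end spDist

noncomputable def fastmapCoord (G : SimpleGraph V) (w : V → V → ℝ) (a b v : V) : ℝ :=
  (spDist G w a v + spDist G w a b - spDist G w v b) / 2

lemma abs_fastmapCoord_sub_le {w : V → V → ℝ} (hG : G.Preconnected)
    (hs : ∀ u v, w u v = w v u) (hn : ∀ u v, G.Adj u v → 0 ≤ w u v) (a b u v : V) :
    |fastmapCoord G w a b u - fastmapCoord G w a b v| ≤ spDist G w u v := by
  have := spDist_comm (G := G) hs u v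
  have := spDist_triangle hG hn a u v
  have := spDist_triangle hG hn a v u
  have := spDist_triangle hG hn u v b
  have := spDist_triangle hG hn v u b
  rw [abs_le]
  constructor <;> unfold fastmapCoord <;> linarith

end SimpleGraph

open SimpleGraph in
theorem fastmap_update_distance_bound_general {V : Type*}
    (G : SimpleGraph V) (hconn : G.Connected) (w : V → V → ℝ)
    (hsymm : ∀ u v, w u v = w v u)
    (hnonneg : ∀ u v, G.Adj u v → 0 ≤ w u v)
    (a b : V) (p : V → ℝ)
    (hp : ∀ v, p v = (spDist G w a v + spDist G w a b - spDist G w v b) / 2)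
    (w' : V → V → ℝ)
    (hw' : ∀ u v, w' u v = w u v - |p u - p v|) :
    ∀ x y : V, spDist G w' x y ≤ spDist G w x y - |p x - p y| := by
  intro x y
  obtain rfl : p = fastmapCoord G w a b := funext hp
  obtain rfl : w' = w - fun u v => |fastmapCoord G w a b u - fastmapCoord G w a b v| :=
    funext₂ hw'
  refine spDist_sub_le (hconn.preconnected x y) (fun u v huv => ?_) (abs_sub_le_walkWeight _)
  exact sub_nonneg.2 <| (abs_fastmapCoord_sub_le hconn.preconnected hsymm hnonneg a b u v).trans
    (spDist_le_of_adj hnonneg huv)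

/-- After one FastMap update, the new shortest-path distance satisfies
`d_{w'}(x,y) ≤ d_w(x,y) - |p(x) - p(y)|`. -/
theorem fastmap_update_distance_bound {V : Type*} [Fintype V]
    (G : SimpleGraph V) (hconn : G.Connected) (w : V → V → ℝ)
    (hsymm : ∀ u v, w u v = w v u)
    (hnonneg : ∀ u v, G.Adj u v → 0 ≤ w u v)
    (a b : V) (p : V → ℝ)
    (hp : ∀ v, p v = (spDist G w a v + spDist G w a b - spDist G w v b) / 2)
    (w' : V → V → ℝ)
    (hw' : ∀ u v, w' u v = w u v - |p u - p v|) :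
    ∀ x y : V, spDist G w' x y ≤ spDist G w x y - |p x - p y| :=
  fastmap_update_distance_bound_general G hconn w hsymm hnonneg a b p hp w' hw'
end

section
/- Consider the FastMap iteration: w¹ = w, and for each i ≥ 1, pᵢ(v) = (d^i(aᵢ,v) + d^i(aᵢ,bᵢ) - d^i(v,bᵢ))/2 for some pivots aᵢ, bᵢ ∈ V, and w^{i+1}(u,v) = w^i(u,v) - |pᵢ(u) - pᵢ(v)| for each edge, where d^i is shortest-path distance under w^i. Then for every i, all weights w^i are nonnegative, hence d^i(x,y) ≥ 0 for all x, y ∈ V. -/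
namespace FastMap

open SimpleGraph

variable {V : Type*} {G : SimpleGraph V} {w : V → V → ℝ}

@[simp]
lemma walkWeight_nil {x : V} : walkWeight w (Walk.nil : G.Walk x x) = 0 := by
  simp [walkWeight]

@[simp]
lemma walkWeight_cons {x y z : V} (h : G.Adj x y) (q : G.Walk y z) :
    walkWeight w (Walk.cons h q) = w x y + walkWeight w q := by
  simp [walkWeight]

@[simp]
lemma walkWeight_append {x y z : V} (q : G.Walk x y) (r : G.Walk y z) :
    walkWeight w (q.append r) = walkWeight w q + walkWeight w r := by
  simp [walkWeight, Walk.darts_append]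

@[simp]
lemma walkWeight_toWalk {x y : V} (h : G.Adj x y) : walkWeight w h.toWalk = w x y := by
  simp [Adj.toWalk]

lemma walkWeight_nonneg (hw : ∀ u v, G.Adj u v → 0 ≤ w u v) {x y : V} (q : G.Walk x y) :
    0 ≤ walkWeight w q :=
  List.sum_nonneg fun _ hc => by
    obtain ⟨d, -, rfl⟩ := List.mem_map.mp hc
    exact hw _ _ d.adj

lemma spDist_nonneg (hw : ∀ u v, G.Adj u v → 0 ≤ w u v) (x y : V) : 0 ≤ spDist G w x y :=
  Real.sInf_nonneg <| by
    rintro _ ⟨q, rfl⟩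
    exact walkWeight_nonneg hw q

lemma spDist_le_walkWeight (hw : ∀ u v, G.Adj u v → 0 ≤ w u v) {x y : V} (q : G.Walk x y) :
    spDist G w x y ≤ walkWeight w q :=
  csInf_le ⟨0, by rintro _ ⟨r, rfl⟩; exact walkWeight_nonneg hw r⟩ ⟨q, rfl⟩

lemma spDist_le_walkWeight_add (hw : ∀ u v, G.Adj u v → 0 ≤ w u v) {x y z : V}
    (q : G.Walk x y) (hyz : G.Reachable y z) :
    spDist G w x z ≤ walkWeight w q + spDist G w y z := by
  obtain ⟨r⟩ := hyz
  rw [← sub_le_iff_le_add']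
  refine le_csInf ⟨_, r, rfl⟩ ?_
  rintro _ ⟨r, rfl⟩
  simpa [add_comm] using spDist_le_walkWeight hw (q.append r)

lemma spDist_le_add_walkWeight (hw : ∀ u v, G.Adj u v → 0 ≤ w u v) {x y z : V}
    (hxy : G.Reachable x y) (q : G.Walk y z) :
    spDist G w x z ≤ spDist G w x y + walkWeight w q := by
  obtain ⟨r⟩ := hxy
  rw [← sub_le_iff_le_add]
  refine le_csInf ⟨_, r, rfl⟩ ?_
  rintro _ ⟨r, rfl⟩
  simpa using spDist_le_walkWeight hw (r.append q)

/-- The paper's `pᵢ(v)` for the pivots `a = aᵢ`, `b = bᵢ`. -/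
noncomputable def pivotCoord (G : SimpleGraph V) (w : V → V → ℝ) (a b v : V) : ℝ :=
  (spDist G w a v + spDist G w a b - spDist G w v b) / 2

lemma abs_pivotCoord_sub_le (hconn : G.Connected) (hw : ∀ u v, G.Adj u v → 0 ≤ w u v)
    (hsymm : ∀ u v, w u v = w v u) (a b : V) {u v : V} (huv : G.Adj u v) :
    |pivotCoord G w a b u - pivotCoord G w a b v| ≤ w u v := by
  have hau := spDist_le_add_walkWeight hw (hconn a v) huv.symm.toWalk
  have hav := spDist_le_add_walkWeight hw (hconn a u) huv.toWalk
  have hub := spDist_le_walkWeight_add hw huv.toWalk (hconn v b)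
  have hvb := spDist_le_walkWeight_add hw huv.symm.toWalk (hconn u b)
  simp only [walkWeight_toWalk] at hau hav hub hvb
  rw [abs_le, pivotCoord, pivotCoord]
  constructor <;> linarith [hsymm u v]

end FastMap

/- `W 0` is the paper's `w¹`: iterations are 0-indexed. -/
open FastMap in
theorem fastmap_iter_nonneg_general {V : Type*} (G : SimpleGraph V) (hconn : G.Connected) (w : V → V → ℝ)
    (hnonneg : ∀ u v, G.Adj u v → 0 ≤ w u v)
    (W : ℕ → V → V → ℝ) (hW0 : W 0 = w)
    (A B : ℕ → V) (p : ℕ → V → ℝ)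
    (hp : ∀ i v, p i v = (spDist G (W i) (A i) v + spDist G (W i) (A i) (B i)
        - spDist G (W i) v (B i)) / 2)
    (hWsymm : ∀ i u v, W i u v = W i v u)
    (hWsucc : ∀ i u v, G.Adj u v → W (i + 1) u v = W i u v - |p i u - p i v|) :
    (∀ i u v, G.Adj u v → 0 ≤ W i u v) ∧
    (∀ i (x y : V), 0 ≤ spDist G (W i) x y) := by
  have hW : ∀ i u v, G.Adj u v → 0 ≤ W i u v := by
    intro i
    induction i with
    | zero => exact hW0 ▸ hnonneg
    | succ i ih =>
      intro u v huv
      have hpi : p i = pivotCoord G (W i) (A i) (B i) := funext (hp i)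
      rw [hWsucc i u v huv, hpi, sub_nonneg]
      exact abs_pivotCoord_sub_le hconn ih (hWsymm i) (A i) (B i) huv
  exact ⟨hW, fun i => spDist_nonneg (hW i)⟩

/-- Lemma 1 of the FastMap paper: at every iteration, all edge weights are
nonnegative, hence all shortest-path distances are nonnegative. -/
theorem fastmap_iter_nonneg {V : Type*} [Fintype V] (G : SimpleGraph V) (hconn : G.Connected) (w : V → V → ℝ)
    (hsymm : ∀ u v, w u v = w v u)
    (hnonneg : ∀ u v, G.Adj u v → 0 ≤ w u v)
    (W : ℕ → V → V → ℝ) (hW0 : W 0 = w)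
    (A B : ℕ → V) (p : ℕ → V → ℝ)
    (hp : ∀ i v, p i v = (spDist G (W i) (A i) v + spDist G (W i) (A i) (B i)
        - spDist G (W i) v (B i)) / 2)
    (hWsymm : ∀ i u v, W i u v = W i v u)
    (hWsucc : ∀ i u v, G.Adj u v → W (i + 1) u v = W i u v - |p i u - p i v|) :
    (∀ i u v, G.Adj u v → 0 ≤ W i u v) ∧
    (∀ i (x y : V), 0 ≤ spDist G (W i) x y) :=
  fastmap_iter_nonneg_general G hconn w hnonneg W hW0 A B p hp hWsymm hWsucc
end
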